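/- For every compact set K ⊂ ℝ there is N such that for all n ≥ N and all u ∈ K one has q_n u + δ_{n+1} ∈ (0, δ₀), and moreover lim_{n→∞} sup_{u∈K} |ψ₂(q_n u + δ_{n+1})/q_n − (L+1)| = 0. -/

import Mathlib

/-!
Since `|ψ₁'|, |ψ₂'| < 1/2`, the gap `g = ψ₂ - ψ₁` satisfies `0 < g x < x` on `(0, δ₀]`, so `δ n`
decreases to a point of `[0, δ₀)` where `g` vanishes, i.e. to `0`. The cusp condition then says
`q n = o(δ n)`, so the points `q n * u + δ (n + 1) = δ n + q n * (u - 1)` are `δ n + o(δ n)`,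
uniformly for `u` in the bounded set `K`.

From `ψ₁ / g → L` we get `ψ₂ / g → L + 1`, and multiplying by `g x / x → 0` gives `ψ₂'(0) = 0`.
Continuity of `ψ₂'` makes `ψ₂ x - ψ₂ y = o(x - y)` as `x, y → 0⁺`, so
`ψ₂ (q n * u + δ (n + 1)) / q n` differs from `ψ₂ (δ n) / q n → L + 1` by `o(1)`, uniformly on `K`.
-/

open Set Filter Topology Asymptotics

theorem isLittleO_sub_of_tendsto_deriv_zero {f f' : ℝ → ℝ} {s : Set ℝ} {a : ℝ}
    (hs : Convex ℝ s) (hf : ∀ x ∈ s, HasDerivWithinAt f (f' x) s x)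
    (hf' : Tendsto f' (𝓝[s] a) (𝓝 0)) :
    (fun p : ℝ × ℝ => f p.1 - f p.2) =o[𝓝[s] a ×ˢ 𝓝[s] a] fun p => p.1 - p.2 := by
  refine IsLittleO.of_bound fun ε hε => ?_
  obtain ⟨r, hr, hsmall⟩ :=
    Metric.mem_nhdsWithin_iff.1 (hf'.eventually (Metric.closedBall_mem_nhds 0 hε))
  have hball : s ∩ Metric.ball a r ∈ 𝓝[s] a := inter_mem_nhdsWithin s (Metric.ball_mem_nhds a hr)
  filter_upwards [prod_mem_prod hball hball] with p ⟨hp₁, hp₂⟩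
  refine (Convex.norm_image_sub_le_of_norm_hasDerivWithin_le
    (fun x hx => (hf x hx.1).mono inter_subset_left) (fun x hx => ?_)
    (hs.inter (convex_ball a r)) hp₂ hp₁)
  simpa using hsmall ⟨hx.2, hx.1⟩

theorem isBigO_mul_sub_const_prod_principal {ι : Type*} {l : Filter ι} {K : Set ℝ}
    (hK : Bornology.IsBounded K) (f : ι → ℝ) (c : ℝ) :
    (fun p : ι × ℝ => f p.1 * (p.2 - c)) =O[l ×ˢ 𝓟 K] fun p => f p.1 := by
  obtain ⟨C, hC⟩ := hK.exists_norm_le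
  refine IsBigO.of_bound (C + ‖c‖) (eventually_prod_principal_iff.2 (Eventually.of_forall
    fun i u hu => ?_))
  rw [norm_mul, mul_comm]
  gcongr
  exact (norm_sub_le u c).trans (by linarith [hC u hu])

theorem tendsto_nhdsGT_of_isLittleO_sub {ι : Type*} {l : Filter ι} {x y : ι → ℝ}
    (hy : Tendsto y l (𝓝[>] 0)) (hxy : (fun i => x i - y i) =o[l] y) :
    Tendsto x l (𝓝[>] 0) := by
  obtain ⟨hy₀, hy_pos⟩ := tendsto_nhdsWithin_iff.1 hy
  refine tendsto_nhdsWithin_iff.2 ⟨?_, ?_⟩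
  · simpa using hy₀.add (hxy.trans_tendsto hy₀)
  · filter_upwards [hy_pos, hxy.def one_half_pos] with i (hi : 0 < y i) hclose
    rw [Real.norm_eq_abs, Real.norm_of_nonneg hi.le] at hclose
    exact mem_Ioi.2 (by linarith [neg_abs_le (x i - y i)])

theorem tendsto_div_of_isLittleO_sub {ι : Type*} {l : Filter ι} {f : ℝ → ℝ} {F : Filter ℝ}
    (hf : (fun p : ℝ × ℝ => f p.1 - f p.2) =o[F ×ˢ F] fun p => p.1 - p.2)
    {x y q : ι → ℝ} (hx : Tendsto x l F) (hy : Tendsto y l F)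
    (hxy : (fun i => x i - y i) =O[l] q) {c : ℝ} (hfy : Tendsto (fun i => f (y i) / q i) l (𝓝 c)) :
    Tendsto (fun i => f (x i) / q i) l (𝓝 c) := by
  have hdiff : (fun i => f (x i) - f (y i)) =o[l] q :=
    (hf.comp_tendsto (hx.prodMk hy)).trans_isBigO hxy
  simpa [sub_div] using hdiff.tendsto_div_nhds_zero.add hfy

theorem tendsto_iSup_abs_sub_of_tendsto_prod_principal {ι α : Type*} {l : Filter ι} {K : Set α}
    {F : ι → α → ℝ} {c : ℝ} (h : Tendsto (fun p : ι × α => F p.1 p.2) (l ×ˢ 𝓟 K) (𝓝 c)) :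
    Tendsto (fun i => ⨆ u ∈ K, |F i u - c|) l (𝓝 0) := by
  refine Metric.tendsto_nhds.2 fun ε hε => ?_
  have hclose := eventually_prod_principal_iff.1 (Metric.tendsto_nhds.1 h (ε / 2) (half_pos hε))
  filter_upwards [hclose] with i hi
  have hle : ⨆ u ∈ K, |F i u - c| ≤ ε / 2 :=
    Real.iSup_le (fun u => Real.iSup_le (fun hu => (hi u hu).le) (half_pos hε).le)
      (half_pos hε).le
  have hnonneg : 0 ≤ ⨆ u ∈ K, |F i u - c| :=
    Real.iSup_nonneg fun u => Real.iSup_nonneg fun _ => abs_nonneg _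
  rw [Real.dist_eq, sub_zero, abs_of_nonneg hnonneg]
  linarith

section Orbit

variable {a : ℝ} {g : ℝ → ℝ} {δ : ℕ → ℝ}

theorem orbit_mem_Ioc (hg : ∀ x ∈ Ioc 0 a, 0 < g x ∧ g x < x) (hδ₀ : δ 0 ∈ Ioc 0 a)
    (hδ : ∀ n, δ (n + 1) = δ n - g (δ n)) (n : ℕ) : δ n ∈ Ioc 0 a := by
  induction n with
  | zero => exact hδ₀
  | succ n ih =>
    obtain ⟨hg_pos, hg_lt⟩ := hg _ ih
    rw [hδ n]
    exact ⟨by linarith, by linarith [ih.2]⟩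

theorem orbit_tendsto_nhdsGT (hg : ∀ x ∈ Ioc 0 a, 0 < g x ∧ g x < x)
    (hgc : ContinuousOn g (Ioc 0 a)) (hδ₀ : δ 0 ∈ Ioc 0 a)
    (hδ : ∀ n, δ (n + 1) = δ n - g (δ n)) : Tendsto δ atTop (𝓝[>] 0) := by
  have hmem := orbit_mem_Ioc hg hδ₀ hδ
  have hanti : Antitone δ := antitone_nat_of_succ_le fun n => by
    rw [hδ n]; linarith [(hg _ (hmem n)).1]
  have hbdd : BddBelow (range δ) := ⟨0, by rintro _ ⟨n, rfl⟩; exact (hmem n).1.le⟩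
  have hlim := tendsto_atTop_ciInf hanti hbdd
  set ℓ := ⨅ n, δ n
  have hℓ : ℓ = 0 := by
    refine ((le_ciInf fun n => (hmem n).1.le).eq_or_lt.resolve_right fun hℓ_pos => ?_).symm
    -- at a positive limit `ℓ` the steps `g (δ n)` would tend to `g ℓ > 0`
    have hℓ_mem : ℓ ∈ Ioc 0 a := ⟨hℓ_pos, (ciInf_le hbdd 0).trans (hmem 0).2⟩
    have hsteps : Tendsto (fun n => g (δ n)) atTop (𝓝 (g ℓ)) :=
      (hgc ℓ hℓ_mem).tendsto.comp
        (tendsto_nhdsWithin_iff.2 ⟨hlim, Eventually.of_forall hmem⟩)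
    have hsteps' : Tendsto (fun n => g (δ n)) atTop (𝓝 (ℓ - ℓ)) :=
      (hlim.sub (hlim.comp (tendsto_add_atTop_nat 1))).congr fun n => by
        simp [hδ n]
    exact (hg ℓ hℓ_mem).1.ne' (by simpa using tendsto_nhds_unique hsteps hsteps')
  rw [hℓ] at hlim
  exact tendsto_nhdsWithin_iff.2 ⟨hlim, Eventually.of_forall fun n => (hmem n).1⟩

end Orbit

theorem derivWithin_Icc_zero_eq_of_tendsto_div {f : ℝ → ℝ} {b c : ℝ} (hb : 0 < b)
    (hf : DifferentiableWithinAt ℝ f (Icc 0 b) 0) (hf0 : f 0 = 0)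
    (h : Tendsto (fun x => f x / x) (𝓝[>] 0) (𝓝 c)) : derivWithin f (Icc 0 b) 0 = c := by
  have hderiv : HasDerivWithinAt f (derivWithin f (Icc 0 b) 0) (Ioi 0) 0 :=
    hf.hasDerivWithinAt.mono_of_mem_nhdsWithin (Icc_mem_nhdsGT hb)
  refine tendsto_nhds_unique ((hasDerivWithinAt_iff_tendsto_slope' self_notMem_Ioi).1 hderiv) ?_
  simpa [slope_fun_def_field, hf0] using h

theorem ContDiffOn.isLittleO_sub_nhdsGT {f : ℝ → ℝ} {b : ℝ} (hb : 0 < b)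
    (hf : ContDiffOn ℝ 1 f (Icc 0 b)) (hf0 : derivWithin f (Icc 0 b) 0 = 0) :
    (fun p : ℝ × ℝ => f p.1 - f p.2) =o[𝓝[>] 0 ×ˢ 𝓝[>] 0] fun p => p.1 - p.2 := by
  have hmem : (0 : ℝ) ∈ Icc 0 b := ⟨le_rfl, hb.le⟩
  have hderiv : Tendsto (derivWithin f (Icc 0 b)) (𝓝[Ioc 0 b] 0) (𝓝 0) := by
    have := (hf.continuousOn_derivWithin (uniqueDiffOn_Icc hb) le_rfl 0 hmem).tendsto
    rw [hf0] at this
    exact this.mono_left (nhdsWithin_mono 0 Ioc_subset_Icc_self)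
  rw [← nhdsWithin_Ioc_eq_nhdsGT hb]
  exact isLittleO_sub_of_tendsto_deriv_zero (convex_Ioc 0 b) (fun x hx =>
    ((hf.differentiableOn one_ne_zero) x (Ioc_subset_Icc_self hx)).hasDerivWithinAt.mono
      Ioc_subset_Icc_self) hderiv

section CuspDomain

variable {δ₀ : ℝ} {ψ₁ ψ₂ : ℝ → ℝ}

theorem sub_lt_self_of_abs_derivWithin_lt_half (hψ₁ : DifferentiableOn ℝ ψ₁ (Icc 0 δ₀))
    (hψ₂ : DifferentiableOn ℝ ψ₂ (Icc 0 δ₀)) (hψ₁0 : ψ₁ 0 = 0) (hψ₂0 : ψ₂ 0 = 0)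
    (hψ₁' : ∀ x ∈ Ioo 0 δ₀, |derivWithin ψ₁ (Icc 0 δ₀) x| < 1 / 2)
    (hψ₂' : ∀ x ∈ Ioo 0 δ₀, |derivWithin ψ₂ (Icc 0 δ₀) x| < 1 / 2) :
    ∀ x ∈ Ioc 0 δ₀, ψ₂ x - ψ₁ x < x := by
  intro x hx
  have hderiv : ∀ y ∈ interior (Icc 0 δ₀), deriv (fun x => ψ₂ x - ψ₁ x) y < 1 := by
    intro y hy
    rw [interior_Icc] at hy
    have hnhds : Icc 0 δ₀ ∈ 𝓝 y := Icc_mem_nhds hy.1 hy.2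
    have h₁ := hψ₁' y hy
    have h₂ := hψ₂' y hy
    rw [derivWithin_of_mem_nhds hnhds] at h₁ h₂
    rw [deriv_fun_sub ((hψ₂ y (Ioo_subset_Icc_self hy)).differentiableAt hnhds)
      ((hψ₁ y (Ioo_subset_Icc_self hy)).differentiableAt hnhds)]
    linarith [le_abs_self (deriv ψ₂ y), neg_abs_le (deriv ψ₁ y)]
  have hmvt := (convex_Icc 0 δ₀).image_sub_lt_mul_sub_of_deriv_lt (hψ₂.continuousOn.sub hψ₁.continuousOn)
    ((hψ₂.sub hψ₁).mono interior_subset) hderiv 0 ⟨le_rfl, hx.1.le.trans hx.2⟩ x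
    (Ioc_subset_Icc_self hx) hx.1
  simpa [hψ₁0, hψ₂0] using hmvt

theorem tendsto_div_sub_add_one_of_tendsto_div_sub (hδ₀ : 0 < δ₀)
    (hlt : ∀ x ∈ Ioc 0 δ₀, ψ₁ x < ψ₂ x) {L : ℝ}
    (hL : Tendsto (fun x => ψ₁ x / (ψ₂ x - ψ₁ x)) (𝓝[>] 0) (𝓝 L)) :
    Tendsto (fun x => ψ₂ x / (ψ₂ x - ψ₁ x)) (𝓝[>] 0) (𝓝 (L + 1)) := by
  refine (hL.add_const 1).congr' ?_
  filter_upwards [Ioc_mem_nhdsGT hδ₀] with x hx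
  have := (sub_pos.2 (hlt x hx)).ne'
  field_simp
  ring

theorem tendsto_div_self_of_tendsto_div_sub (hδ₀ : 0 < δ₀) (hlt : ∀ x ∈ Ioc 0 δ₀, ψ₁ x < ψ₂ x)
    (hcusp : Tendsto (fun x => (ψ₂ x - ψ₁ x) / x) (𝓝[>] (0 : ℝ)) (𝓝 0)) {c : ℝ}
    (hratio : Tendsto (fun x => ψ₂ x / (ψ₂ x - ψ₁ x)) (𝓝[>] 0) (𝓝 c)) :
    Tendsto (fun x => ψ₂ x / x) (𝓝[>] 0) (𝓝 0) := by
  refine (zero_mul c ▸ hcusp.mul hratio).congr' ?_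
  filter_upwards [Ioc_mem_nhdsGT hδ₀] with x hx
  have := (sub_pos.2 (hlt x hx)).ne'
  have := hx.1.ne'
  field_simp

end CuspDomain

/-- The rescaled upper boundary `u ↦ ψ₂(q_n u + δ_{n+1})/q_n` converges
uniformly on compact sets to the constant `L + 1`: for every compact `K ⊆ ℝ`
eventually `q_n u + δ_{n+1} ∈ (0, δ₀)` for all `u ∈ K`, and
`sup_{u ∈ K} |ψ₂(q_n u + δ_{n+1})/q_n - (L + 1)| → 0`. -/
theorem rescaled_upper_boundary_tendsto
    (δ₀ : ℝ) (hδ₀ : 0 < δ₀)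
    (ψ₁ ψ₂ : ℝ → ℝ)
    (hψ₁C1 : ContDiffOn ℝ 1 ψ₁ (Icc 0 δ₀))
    (hψ₂C1 : ContDiffOn ℝ 1 ψ₂ (Icc 0 δ₀))
    (hψ₁0 : ψ₁ 0 = 0) (hψ₂0 : ψ₂ 0 = 0)
    (hlt : ∀ x ∈ Ioc 0 δ₀, ψ₁ x < ψ₂ x)
    (hψ₁' : ∀ x ∈ Icc 0 δ₀, |derivWithin ψ₁ (Icc 0 δ₀) x| < 1 / 2)
    (hψ₂' : ∀ x ∈ Icc 0 δ₀, |derivWithin ψ₂ (Icc 0 δ₀) x| < 1 / 2)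
    (hcusp : Tendsto (fun x => (ψ₂ x - ψ₁ x) / x) (𝓝[>] (0 : ℝ)) (𝓝 0))
    (L : ℝ)
    (hL : Tendsto (fun x => ψ₁ x / (ψ₂ x - ψ₁ x)) (𝓝[>] (0 : ℝ)) (𝓝 L))
    (δ : ℕ → ℝ) (q : ℕ → ℝ)
    (hδ0 : δ 0 = δ₀)
    (hq : ∀ n, q n = ψ₂ (δ n) - ψ₁ (δ n))
    (hδrec : ∀ n, δ (n + 1) = δ n - q n) :
    ∀ K : Set ℝ, IsCompact K →
      (∃ N : ℕ, ∀ n ≥ N, ∀ u ∈ K, q n * u + δ (n + 1) ∈ Ioo 0 δ₀) ∧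
        Tendsto (fun n => ⨆ u ∈ K, |ψ₂ (q n * u + δ (n + 1)) / q n - (L + 1)|)
          atTop (𝓝 0) := by
  intro K hK
  have hψ₁d := hψ₁C1.differentiableOn one_ne_zero
  have hψ₂d := hψ₂C1.differentiableOn one_ne_zero
  have hgap : ∀ x ∈ Ioc 0 δ₀, 0 < ψ₂ x - ψ₁ x ∧ ψ₂ x - ψ₁ x < x := fun x hx =>
    ⟨sub_pos.2 (hlt x hx), sub_lt_self_of_abs_derivWithin_lt_half hψ₁d hψ₂d hψ₁0 hψ₂0
      (fun y hy => hψ₁' y (Ioo_subset_Icc_self hy)) (fun y hy => hψ₂' y (Ioo_subset_Icc_self hy))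
      x hx⟩
  have hδlim : Tendsto δ atTop (𝓝[>] 0) :=
    orbit_tendsto_nhdsGT hgap ((hψ₂C1.continuousOn.sub hψ₁C1.continuousOn).mono
      Ioc_subset_Icc_self) (by rw [hδ0]; exact ⟨hδ₀, le_rfl⟩) fun n => by rw [hδrec, hq]
  have hqδ : q =o[atTop] δ := by
    refine (isLittleO_iff_tendsto' ((tendsto_nhdsWithin_iff.1 hδlim).2.mono
      fun n hn h0 => absurd h0 (ne_of_gt hn))).2 ((hcusp.comp hδlim).congr fun n => ?_)
    simp [hq]
  have hratio := tendsto_div_sub_add_one_of_tendsto_div_sub hδ₀ hlt hL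
  have hE : Tendsto (fun n => ψ₂ (δ n) / q n) atTop (𝓝 (L + 1)) :=
    (hratio.comp hδlim).congr fun n => by simp [hq]
  have hψ₂o := hψ₂C1.isLittleO_sub_nhdsGT hδ₀ (derivWithin_Icc_zero_eq_of_tendsto_div hδ₀
    (hψ₂d 0 ⟨le_rfl, hδ₀.le⟩) hψ₂0 (tendsto_div_self_of_tendsto_div_sub hδ₀ hlt hcusp hratio))
  have hxy : (fun p : ℕ × ℝ => q p.1 * p.2 + δ (p.1 + 1) - δ p.1) =O[atTop ×ˢ 𝓟 K]
      fun p => q p.1 := by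
    refine (isBigO_mul_sub_const_prod_principal hK.isBounded q 1).congr_left fun p => ?_
    rw [hδrec]
    ring
  have hy : Tendsto (fun p : ℕ × ℝ => δ p.1) (atTop ×ˢ 𝓟 K) (𝓝[>] 0) := hδlim.comp tendsto_fst
  have hx := tendsto_nhdsGT_of_isLittleO_sub hy (hxy.trans_isLittleO (hqδ.comp_tendsto tendsto_fst))
  exact ⟨eventually_atTop.1 (eventually_prod_principal_iff.1 (hx (Ioo_mem_nhdsGT hδ₀))),
    tendsto_iSup_abs_sub_of_tendsto_prod_principal
      (tendsto_div_of_isLittleO_sub hψ₂o hx hy hxy (hE.comp tendsto_fst))⟩
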